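/- Let k ≥ 1 and m ≥ 0 be fixed integers and let x > 0 be fixed. Then there exists a constant C > 0 such that for all integers n ≥ k + m, |M_{n,k}(φ_{x,m}; x)| ≤ C · n^{−⌊(m+1)/2⌋}; that is, M_{n,k}(φ_{x,m}; x) = O(n^{−⌊(m+1)/2⌋}) as n → ∞. -/

import Mathlib

/-!
Expanding `(t - x) ^ m` binomially and evaluating the Beta integrals
`∫₀^∞ t^a (x+t)^-(a+d+2) dt = a! d! / ((a+d+1)! x^(d+1))` gives
`M_{n,k}(φ_{x,m}; x) = x^m P(n) / (n (n-1) ⋯ (n-m+1))` with `P = ∑ⱼ (-1)^(m-j) C(m,j) fⱼ` and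
`fⱼ = ∏_{i<j} (X + 1 - k + i) * ∏_{j≤i<m} (X - i)`.
The recurrence `f_{j+1} * (X - j) = fⱼ * (X + 1 - k + j)` expresses the forward difference in `j`
of the coefficient of `X^(m-r)` in `fⱼ` through the coefficients of `X^(m-r+1)`; by induction on
`r` that coefficient is a polynomial of degree `≤ 2r` in `j`, so the `m`-th finite difference
kills it as soon as `2r < m`. Hence `deg P ≤ ⌊m/2⌋`, and the moment is
`O(n^(⌊m/2⌋ - m)) = O(n^-⌊(m+1)/2⌋)`.
-/

open MeasureTheory Set

/-- The Gamma-type operator `M_{n,k}(f;x)`. -/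
noncomputable def Mnk (n k : ℕ) (f : ℝ → ℝ) (x : ℝ) : ℝ :=
  (((2 * n - k + 1).factorial : ℝ) * x ^ (n + 1) /
      ((n.factorial : ℝ) * ((n - k).factorial : ℝ))) *
    ∫ t in Ioi (0 : ℝ), t ^ (n - k) / (x + t) ^ (2 * n - k + 2) * f t

/-- The polynomial weight: `w_0 = 1`, `w_p(x) = 1/(1+x^p)` for `p ≥ 1`. -/
noncomputable def wp (p : ℕ) (x : ℝ) : ℝ := if p = 0 then 1 else 1 / (1 + x ^ p)

/-- The weighted sup-norm `‖f‖_p = sup_{x ≥ 0} w_p(x)|f(x)|`. -/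
noncomputable def pNorm (p : ℕ) (f : ℝ → ℝ) : ℝ :=
  ⨆ x : {x : ℝ // 0 ≤ x}, wp p x.val * |f x.val|

/-- Second symmetric difference `Δ_h² f`. -/
def Delta2 (h : ℝ) (f : ℝ → ℝ) (x : ℝ) : ℝ := f (x + 2 * h) - 2 * f (x + h) + f x

/-- Second weighted modulus of smoothness `ω_p²(f;δ)`. -/
noncomputable def omega2 (p : ℕ) (f : ℝ → ℝ) (δ : ℝ) : ℝ :=
  ⨆ h : {h : ℝ // 0 < h ∧ h ≤ δ}, pNorm p (Delta2 h.val f)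

/-- First weighted modulus `ω_p¹(f;δ)`. -/
noncomputable def omega1 (p : ℕ) (f : ℝ → ℝ) (δ : ℝ) : ℝ :=
  sSup {y : ℝ | ∃ t x : ℝ, 0 ≤ t ∧ 0 ≤ x ∧ |t - x| ≤ δ ∧ y = wp p x * |f t - f x|}

/-- Membership in the weighted space `C_p`: `w_p·f` is bounded and uniformly
continuous on `[0,∞)`. -/
def CpMem (p : ℕ) (f : ℝ → ℝ) : Prop :=
  (∃ B : ℝ, ∀ x ≥ (0 : ℝ), |wp p x * f x| ≤ B) ∧
    UniformContinuousOn (fun x => wp p x * f x) (Ici 0)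

/-- Steklov mean `f_h`. -/
noncomputable def steklov (f : ℝ → ℝ) (h : ℝ) (x : ℝ) : ℝ :=
  4 / h ^ 2 *
    ∫ s in (0 : ℝ)..(h / 2), ∫ t in (0 : ℝ)..(h / 2),
      (2 * f (x + s + t) - f (x + 2 * (s + t)))

open Polynomial Finset Filter Topology
open scoped Nat

theorem descPochhammer_succ_comp_X_add_one_sub {R : Type*} [CommRing R] (n : ℕ) :
    (descPochhammer R (n + 1)).comp (X + 1) - descPochhammer R (n + 1) =
      C ((n : R) + 1) * descPochhammer R n := by
  nth_rewrite 1 [descPochhammer_succ_left]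
  rw [descPochhammer_succ_right, mul_comp, X_comp, comp_assoc, sub_comp, X_comp, one_comp,
    add_sub_cancel_right, comp_X, C_add, C_1, ← map_natCast C]
  ring

theorem sum_range_alternating_choose_mul_eval_eq_zero {R : Type*} [CommRing R] {p : R[X]}
    {m : ℕ} (hp : p.natDegree < m) :
    ∑ j ∈ range (m + 1), (-1) ^ (m - j) * (m.choose j : R) * p.eval (j : R) = 0 := by
  have := congrFun (fwdDiff_iter_eq_zero_of_degree_lt hp) 0
  rw [fwdDiff_iter_eq_sum_shift] at this
  simpa [zsmul_eq_mul] using this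

theorem abs_eval_le_sum_abs_coeff_mul_pow {p : ℝ[X]} {d : ℕ} (hp : p.natDegree ≤ d) {y : ℝ}
    (hy : 1 ≤ y) : |p.eval y| ≤ (∑ i ∈ range (d + 1), |p.coeff i|) * y ^ d := by
  rw [eval_eq_sum_range' (Nat.lt_succ_of_le hp), sum_mul]
  refine (abs_sum_le_sum_abs _ _).trans (sum_le_sum fun i hi => ?_)
  rw [abs_mul, abs_pow, abs_of_nonneg (show 0 ≤ y by linarith)]
  gcongr
  exact Nat.lt_succ_iff.mp (mem_range.mp hi)

section Antidifference

variable {K : Type*} [Field K] [CharZero K]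

theorem exists_comp_X_add_one_sub_eq {p : K[X]} {d : ℕ} (hp : p.natDegree ≤ d) :
    ∃ q : K[X], q.natDegree ≤ d + 1 ∧ q.comp (X + 1) - q = p := by
  induction d generalizing p with
  | zero =>
    refine ⟨C (p.coeff 0) * X, (natDegree_C_mul_le _ _).trans natDegree_X_le, ?_⟩
    rw [eq_C_of_natDegree_le_zero hp]
    simp only [mul_comp, C_comp, X_comp, coeff_C_zero]
    ring
  | succ d ih =>
    set c := p.coeff (d + 1)
    have hlower : (p - C c * descPochhammer K (d + 1)).natDegree ≤ d := by
      rw [natDegree_le_iff_coeff_eq_zero]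
      intro i hi
      rcases (Nat.succ_le_of_lt hi).eq_or_lt with rfl | hi
      · have hlead := (monic_descPochhammer K (d + 1)).coeff_natDegree
        rw [descPochhammer_natDegree] at hlead
        simp [c, hlead]
      · rw [coeff_sub, coeff_C_mul, coeff_eq_zero_of_natDegree_lt (by omega),
          coeff_eq_zero_of_natDegree_lt (by rw [descPochhammer_natDegree]; omega), mul_zero,
          sub_zero]
    obtain ⟨q, hq, hqp⟩ := ih hlower
    refine ⟨q + C (c / (d + 2)) * descPochhammer K (d + 2), ?_, ?_⟩
    · refine natDegree_add_le_of_degree_le (by omega) ((natDegree_C_mul_le _ _).trans ?_)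
      rw [descPochhammer_natDegree]
    · have hc : C (c / (d + 2)) * C (((d + 1 : ℕ) : K) + 1) = C c := by
        have hd : (d : K) + 2 ≠ 0 := by norm_cast
        rw [← C_mul]
        congr 1
        push_cast
        field_simp
        ring
      rw [add_comp, mul_comp, C_comp]
      linear_combination hqp + descPochhammer K (d + 1) * hc +
        C (c / (d + 2)) * descPochhammer_succ_comp_X_add_one_sub (R := K) (d + 1)

theorem exists_eval_eq_of_sub_eq_eval {f : ℕ → K} {p : K[X]} {d m : ℕ} (hp : p.natDegree ≤ d)
    (hf : ∀ j < m, f (j + 1) - f j = p.eval (j : K)) :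
    ∃ q : K[X], q.natDegree ≤ d + 1 ∧ ∀ j ≤ m, f j = q.eval (j : K) := by
  obtain ⟨q, hq, hqp⟩ := exists_comp_X_add_one_sub_eq hp
  refine ⟨q + C (f 0 - q.eval 0), natDegree_add_C.trans_le hq, fun j hj => ?_⟩
  induction j with
  | zero => simp
  | succ j ih =>
    have hstep := congrArg (eval (j : K)) hqp
    simp only [eval_sub, eval_comp, eval_add, eval_X, eval_one] at hstep
    simp only [eval_add, eval_C, Nat.cast_succ] at ih ⊢
    linear_combination hf j (by omega) - hstep + ih (by omega)

end Antidifference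

section MomentPolynomial

variable {K : Type*} [Field K] (a : K) (m : ℕ)

/-- For `a = 1 - k` and `k ≤ n`, `j ≤ m ≤ n`, its value at `n` is
`(n - k + j)! (n - j)! / ((n - k)! (n - m)!)`. -/
noncomputable def momentFactor (j : ℕ) : K[X] :=
  (∏ i ∈ range j, (X + C (a + i))) * ∏ i ∈ Ico j m, (X - C (i : K))

noncomputable def centralMomentPoly : K[X] :=
  ∑ j ∈ range (m + 1), C ((-1 : K) ^ (m - j) * m.choose j) * momentFactor a m j

variable {a m}

theorem monic_momentFactor (j : ℕ) : (momentFactor a m j).Monic :=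
  (monic_prod_of_monic _ _ fun _ _ => monic_X_add_C _).mul
    (monic_prod_of_monic _ _ fun _ _ => monic_X_sub_C _)

theorem natDegree_momentFactor {j : ℕ} (hj : j ≤ m) : (momentFactor a m j).natDegree = m := by
  rw [momentFactor, (monic_prod_of_monic _ _ fun _ _ => monic_X_add_C _).natDegree_mul
      (monic_prod_of_monic _ _ fun _ _ => monic_X_sub_C _),
    natDegree_prod_of_monic _ _ fun _ _ => monic_X_add_C _,
    natDegree_prod_of_monic _ _ fun _ _ => monic_X_sub_C _]
  simp only [natDegree_X_add_C, natDegree_X_sub_C, sum_const, card_range, Nat.card_Ico,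
    smul_eq_mul, mul_one]
  omega

theorem momentFactor_succ_mul {j : ℕ} (hj : j < m) :
    momentFactor a m (j + 1) * (X - C (j : K)) = momentFactor a m j * (X + C (a + j)) := by
  rw [momentFactor, momentFactor, prod_range_succ, prod_eq_prod_Ico_succ_bot hj]
  ring

theorem coeff_momentFactor_succ_sub {r j : ℕ} (hr : r < m) (hj : j < m) :
    (momentFactor a m (j + 1)).coeff (m - (r + 1)) - (momentFactor a m j).coeff (m - (r + 1)) =
      (a + j) * (momentFactor a m j).coeff (m - r) +
        j * (momentFactor a m (j + 1)).coeff (m - r) := by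
  have h := congrArg (coeff · (m - (r + 1) + 1)) (momentFactor_succ_mul (a := a) hj)
  rw [coeff_mul_X_sub_C, mul_add, coeff_add, coeff_mul_X, coeff_mul_C,
    show m - (r + 1) + 1 = m - r by omega] at h
  linear_combination h

variable [CharZero K]

theorem exists_natDegree_le_coeff_momentFactor_eq {r : ℕ} (hr : r ≤ m) :
    ∃ p : K[X], p.natDegree ≤ 2 * r ∧
      ∀ j ≤ m, (momentFactor a m j).coeff (m - r) = p.eval (j : K) := by
  induction r with
  | zero =>
    refine ⟨1, natDegree_one.le, fun j hj => ?_⟩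
    have hlead := (monic_momentFactor (a := a) (m := m) j).coeff_natDegree
    rw [natDegree_momentFactor hj] at hlead
    rw [Nat.sub_zero, hlead, eval_one]
  | succ r ih =>
    obtain ⟨p, hp, hpj⟩ := ih (by omega)
    have hq : ((X + C a) * p + X * p.comp (X + 1)).natDegree ≤ 2 * r + 1 := by
      refine natDegree_add_le_of_degree_le (natDegree_mul_le.trans ?_)
        (natDegree_mul_le.trans ?_)
      · rw [natDegree_X_add_C]; omega
      · rw [natDegree_X, natDegree_comp, ← C_1, natDegree_X_add_C, mul_one]; omega
    refine exists_eval_eq_of_sub_eq_eval hq fun j hj => ?_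
    rw [coeff_momentFactor_succ_sub (by omega) hj, hpj j hj.le, hpj (j + 1) hj]
    simp only [eval_add, eval_mul, eval_X, eval_C, eval_comp, eval_one, Nat.cast_succ]
    ring

theorem natDegree_centralMomentPoly_le : (centralMomentPoly a m).natDegree ≤ m / 2 := by
  rw [natDegree_le_iff_coeff_eq_zero]
  intro N hN
  simp only [centralMomentPoly, finsetSum_coeff, coeff_C_mul]
  rcases lt_or_ge m N with hmN | hNm
  · refine sum_eq_zero fun j hj => ?_
    have hjm : j ≤ m := Nat.lt_succ_iff.mp (mem_range.mp hj)
    rw [coeff_eq_zero_of_natDegree_lt ((natDegree_momentFactor hjm).trans_lt hmN), mul_zero]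
  · obtain ⟨p, hp, hpj⟩ := exists_natDegree_le_coeff_momentFactor_eq (a := a) (Nat.sub_le m N)
    rw [← sum_range_alternating_choose_mul_eval_eq_zero
      (hp.trans_lt (show 2 * (m - N) < m by omega))]
    refine sum_congr rfl fun j hj => ?_
    rw [← hpj j (Nat.lt_succ_iff.mp (mem_range.mp hj)), Nat.sub_sub_self hNm]

end MomentPolynomial

section Factorials

theorem cast_descFactorial_eq_prod (n j : ℕ) :
    (n.descFactorial j : ℝ) = ∏ i ∈ range j, ((n : ℝ) - i) := by
  rw [← descPochhammer_eval_eq_descFactorial, descPochhammer_eval_eq_prod_range]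

theorem factorial_ratio_eq_eval_momentFactor {n k m j : ℕ} (hk : k ≤ n) (hj : j ≤ m)
    (hm : m ≤ n) :
    ((n - k + j)! * (n - j)! / (n ! * (n - k)!) : ℝ) =
      (momentFactor (1 - k : ℝ) m j).eval (n : ℝ) / n.descFactorial m := by
  have hrising : ((n - k + j)! : ℝ) = (n - k)! * ∏ i ∈ range j, ((n : ℝ) + (1 - k + i)) := by
    rw [← Nat.factorial_mul_ascFactorial, Nat.ascFactorial_eq_prod_range]
    push_cast [Nat.cast_sub hk]
    exact congrArg _ (prod_congr rfl fun i _ => by ring)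
  have hfalling : (n ! : ℝ) * ∏ i ∈ Ico j m, ((n : ℝ) - i) = (n - j)! * n.descFactorial m := by
    rw [← Nat.factorial_mul_descFactorial (hj.trans hm), Nat.cast_mul,
      cast_descFactorial_eq_prod, cast_descFactorial_eq_prod, ← prod_range_mul_prod_Ico _ hj]
    ring
  have hD : (n.descFactorial m : ℝ) ≠ 0 := by exact_mod_cast (Nat.descFactorial_pos.mpr hm).ne'
  simp only [momentFactor, eval_mul, eval_prod, eval_add, eval_sub, eval_X, eval_C]
  rw [div_eq_div_iff (by positivity) hD, hrising]
  linear_combination (-(n - k)! * ∏ i ∈ range j, ((n : ℝ) + (1 - k + i))) * hfalling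

theorem pow_le_succ_pow_mul_descFactorial {n m : ℕ} (hm : m ≤ n) :
    n ^ m ≤ (m + 1) ^ m * n.descFactorial m := by
  have hbase : n ≤ (m + 1) * (n + 1 - m) := by
    rw [show n + 1 - m = n - m + 1 by omega]
    nlinarith [Nat.sub_add_cancel hm]
  calc n ^ m ≤ ((m + 1) * (n + 1 - m)) ^ m := Nat.pow_le_pow_left hbase m
    _ ≤ (m + 1) ^ m * n.descFactorial m := by
        rw [mul_pow]
        exact Nat.mul_le_mul_left _ (Nat.pow_sub_le_descFactorial n m)

theorem abs_eval_div_descFactorial_le {p : ℝ[X]} {m n : ℕ} (hp : p.natDegree ≤ m / 2)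
    (hn : 1 ≤ n) (hm : m ≤ n) :
    |p.eval (n : ℝ) / n.descFactorial m| ≤
      (∑ i ∈ range (m / 2 + 1), |p.coeff i|) * (m + 1) ^ m * ((n : ℝ) ^ ((m + 1) / 2))⁻¹ := by
  set B := ∑ i ∈ range (m / 2 + 1), |p.coeff i|
  have hD : (0 : ℝ) < n.descFactorial m := by exact_mod_cast Nat.descFactorial_pos.mpr hm
  have hlower : (n : ℝ) ^ m / (m + 1) ^ m ≤ n.descFactorial m := by
    rw [div_le_iff₀ (by positivity)]
    exact_mod_cast (pow_le_succ_pow_mul_descFactorial hm).trans_eq (mul_comm _ _)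
  have hsplit : (n : ℝ) ^ m = (n : ℝ) ^ (m / 2) * (n : ℝ) ^ ((m + 1) / 2) := by
    rw [← pow_add]
    congr 1
    omega
  rw [abs_div, abs_of_pos hD]
  calc |p.eval (n : ℝ)| / n.descFactorial m
      ≤ B * (n : ℝ) ^ (m / 2) / ((n : ℝ) ^ m / (m + 1) ^ m) := by
        gcongr
        exact abs_eval_le_sum_abs_coeff_mul_pow hp (by exact_mod_cast hn)
    _ = B * (m + 1) ^ m * ((n : ℝ) ^ ((m + 1) / 2))⁻¹ := by
        rw [hsplit]
        field_simp

end Factorials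

section BetaIntegral

variable {x : ℝ}

theorem integrableOn_Ioi_pow_div_add_pow (hx : 0 < x) (a d : ℕ) :
    IntegrableOn (fun t : ℝ => t ^ a / (x + t) ^ (a + d + 2)) (Ioi 0) := by
  have hdom : IntegrableOn (fun t : ℝ => (x ^ d)⁻¹ * (t + x) ^ (-2 : ℝ)) (Ioi 0) :=
    (integrableOn_add_rpow_Ioi_of_lt (by norm_num) (by linarith)).const_mul _
  refine hdom.mono'
    (by fun_prop : Measurable fun t : ℝ => t ^ a / (x + t) ^ (a + d + 2)).aestronglyMeasurable ?_
  filter_upwards [ae_restrict_mem measurableSet_Ioi] with t (ht : 0 < t)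
  rw [Real.norm_of_nonneg (by positivity), Real.rpow_neg (by linarith), add_comm t x,
    Real.rpow_two, ← mul_inv, div_le_iff₀ (by positivity), pow_add, pow_add]
  calc t ^ a = t ^ a * 1 := (mul_one _).symm
    _ ≤ (x + t) ^ a * ((x ^ d)⁻¹ * (x + t) ^ d) := by
        gcongr
        · linarith
        · rw [le_inv_mul_iff₀ (by positivity), mul_one]
          gcongr
          linarith
    _ = (x ^ d * (x + t) ^ 2)⁻¹ * ((x + t) ^ a * (x + t) ^ d * (x + t) ^ 2) := by
        field_simp

theorem tendsto_pow_div_add_pow_atTop {a b : ℕ} (hab : a < b) :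
    Tendsto (fun t : ℝ => t ^ a / (x + t) ^ b) atTop (𝓝 0) := by
  have hdeg : (X ^ a : ℝ[X]).degree < ((X + C x) ^ b).degree := by
    rw [degree_X_pow, degree_pow, degree_X_add_C, nsmul_one]
    exact_mod_cast hab
  simpa [add_comm] using div_tendsto_atTop_zero_of_degree_lt _ _ hdeg

theorem hasDerivAt_pow_div_add_pow (a b : ℕ) {t : ℝ} (ht : x + t ≠ 0) :
    HasDerivAt (fun t : ℝ => t ^ a / (x + t) ^ (b + 1))
      (a * t ^ (a - 1) / (x + t) ^ (b + 1) - (b + 1) * t ^ a / (x + t) ^ (b + 2)) t := by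
  have hden : HasDerivAt (fun t : ℝ => x + t) 1 t := (hasDerivAt_id t).const_add x
  refine ((hasDerivAt_pow a t).div (hden.fun_pow (b + 1)) (pow_ne_zero _ ht)).congr_deriv ?_
  rw [Nat.add_sub_cancel]
  push_cast
  field_simp
  ring

theorem integral_Ioi_pow_div_add_pow (hx : 0 < x) (a d : ℕ) :
    ∫ t in Ioi 0, t ^ a / (x + t) ^ (a + d + 2) =
      a ! * d ! / ((a + d + 1)! * x ^ (d + 1)) := by
  have hxt : ∀ t ∈ Ici (0 : ℝ), x + t ≠ 0 := fun t (ht : 0 ≤ t) => by positivity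
  induction a with
  | zero =>
    have hg : ∀ t ∈ Ici (0 : ℝ), HasDerivAt (fun t : ℝ => t ^ 0 / (x + t) ^ (d + 1))
        (-((d + 1) * (t ^ 0 / (x + t) ^ (0 + d + 2)))) t := fun t ht =>
      (hasDerivAt_pow_div_add_pow 0 d (hxt t ht)).congr_deriv (by simp; ring_nf)
    have h := integral_Ioi_of_hasDerivAt_of_tendsto' hg
      ((integrableOn_Ioi_pow_div_add_pow hx 0 d).const_mul _).neg
      (tendsto_pow_div_add_pow_atTop (Nat.succ_pos d))
    rw [integral_neg, integral_const_mul] at h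
    simp only [zero_add, pow_zero, add_zero, zero_sub, Nat.factorial_zero, Nat.cast_one,
      one_mul] at h ⊢
    rw [Nat.factorial_succ]
    push_cast
    field_simp
    field_simp at h
    linear_combination -h
  | succ a ih =>
    have hg : ∀ t ∈ Ici (0 : ℝ), HasDerivAt (fun t : ℝ => t ^ (a + 1) / (x + t) ^ (a + d + 2))
        ((a + 1) * (t ^ a / (x + t) ^ (a + d + 2)) -
          (a + d + 2) * (t ^ (a + 1) / (x + t) ^ (a + 1 + d + 2))) t := fun t ht =>
      (hasDerivAt_pow_div_add_pow (a + 1) (a + d + 1) (hxt t ht)).congr_deriv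
        (by push_cast; ring_nf)
    have hint₁ := (integrableOn_Ioi_pow_div_add_pow hx a d).const_mul ((a : ℝ) + 1)
    have hint₂ := (integrableOn_Ioi_pow_div_add_pow hx (a + 1) d).const_mul ((a : ℝ) + d + 2)
    have h := integral_Ioi_of_hasDerivAt_of_tendsto' hg (hint₁.sub hint₂)
      (tendsto_pow_div_add_pow_atTop (by omega))
    rw [integral_sub hint₁ hint₂, integral_const_mul, integral_const_mul, ih] at h
    simp only [add_zero, ne_eq, Nat.add_one_ne_zero, not_false_eq_true, zero_pow, zero_div,
      sub_zero] at h
    rw [show a + 1 + d + 1 = a + d + 1 + 1 by omega, Nat.factorial_succ (a + d + 1),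
      Nat.factorial_succ a]
    push_cast
    field_simp
    field_simp at h
    linear_combination -h

end BetaIntegral

section GammaOperator

variable {n k : ℕ} {x : ℝ}

theorem Mnk_kernel_mul_pow {j : ℕ} (hk : k ≤ n) (hj : j ≤ n) (t : ℝ) :
    t ^ (n - k) / (x + t) ^ (2 * n - k + 2) * t ^ j =
      t ^ (n - k + j) / (x + t) ^ (n - k + j + (n - j) + 2) := by
  rw [show n - k + j + (n - j) + 2 = 2 * n - k + 2 by omega, pow_add t]
  ring

theorem Mnk_pow (hx : 0 < x) (hk : k ≤ n) {j : ℕ} (hj : j ≤ n) :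
    Mnk n k (fun t => t ^ j) x = x ^ j * ((n - k + j)! * (n - j)! / (n ! * (n - k)!)) := by
  simp only [Mnk, Mnk_kernel_mul_pow hk hj, integral_Ioi_pow_div_add_pow hx,
    show n - k + j + (n - j) + 1 = 2 * n - k + 1 by omega]
  rw [show n + 1 = j + (n - j + 1) by omega, pow_add]
  field_simp

theorem Mnk_sub_pow_eq_sum (hx : 0 < x) (hk : k ≤ n) {m : ℕ} (hm : m ≤ n) :
    Mnk n k (fun t => (t - x) ^ m) x =
      ∑ j ∈ range (m + 1), (-x) ^ (m - j) * m.choose j * Mnk n k (fun t => t ^ j) x := by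
  have hint : ∀ j ∈ range (m + 1), Integrable
      (fun t => (-x) ^ (m - j) * m.choose j * (t ^ (n - k) / (x + t) ^ (2 * n - k + 2) * t ^ j))
      (volume.restrict (Ioi 0)) := fun j hj => by
    have hj : j ≤ n := by have := mem_range.mp hj; omega
    simp_rw [Mnk_kernel_mul_pow hk hj]
    exact (integrableOn_Ioi_pow_div_add_pow hx _ _).const_mul _
  have hexpand : ∀ t : ℝ, t ^ (n - k) / (x + t) ^ (2 * n - k + 2) * (t - x) ^ m =
      ∑ j ∈ range (m + 1),
        (-x) ^ (m - j) * m.choose j * (t ^ (n - k) / (x + t) ^ (2 * n - k + 2) * t ^ j) := by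
    intro t
    rw [sub_eq_add_neg, add_pow (R := ℝ) t, mul_sum]
    exact sum_congr rfl fun j _ => by ring
  simp only [Mnk, hexpand, integral_finsetSum _ hint, integral_const_mul, mul_sum]
  exact sum_congr rfl fun j _ => by ring

theorem Mnk_sub_pow_eq {m : ℕ} (hx : 0 < x) (hk : k ≤ n) (hm : m ≤ n) :
    Mnk n k (fun t => (t - x) ^ m) x =
      x ^ m * ((centralMomentPoly (1 - k : ℝ) m).eval (n : ℝ) / n.descFactorial m) := by
  rw [Mnk_sub_pow_eq_sum hx hk hm, centralMomentPoly, eval_finsetSum, sum_div, mul_sum]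
  refine sum_congr rfl fun j hj => ?_
  have hjm : j ≤ m := Nat.lt_succ_iff.mp (mem_range.mp hj)
  rw [Mnk_pow hx hk (hjm.trans hm), factorial_ratio_eq_eval_momentFactor hk hjm hm, eval_mul,
    eval_C, neg_pow, ← pow_sub_mul_pow x hjm]
  ring

end GammaOperator

/-- `M_{n,k}(φ_{x,m};x) = O(n^{-⌊(m+1)/2⌋})` as `n → ∞`, for fixed `x > 0`. -/
theorem Mnk_central_moment_order (k m : ℕ) (hk : 1 ≤ k) (x : ℝ) (hx : 0 < x) :
    ∃ C > (0 : ℝ), ∀ n : ℕ, k + m ≤ n →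
      |Mnk n k (fun t => (t - x) ^ m) x| ≤ C * ((n : ℝ) ^ ((m + 1) / 2 : ℕ))⁻¹ := by
  set P := centralMomentPoly (1 - k : ℝ) m
  set B := ∑ i ∈ range (m / 2 + 1), |P.coeff i|
  have hB : 0 ≤ B := sum_nonneg fun i _ => abs_nonneg _
  refine ⟨x ^ m * ((B + 1) * (m + 1) ^ m), by positivity, fun n hn => ?_⟩
  have hbound := abs_eval_div_descFactorial_le (natDegree_centralMomentPoly_le (a := (1 - k : ℝ)))
    (show 1 ≤ n by omega) (show m ≤ n by omega)
  rw [Mnk_sub_pow_eq hx (by omega) (by omega), abs_mul, abs_of_pos (pow_pos hx m), mul_assoc]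
  gcongr
  exact hbound.trans (by gcongr; linarith)
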